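/- Let λ be a partition of m, μ a partition of n, O a multiset of powers of p summing to m, O' a multiset of powers of p summing to n, and s a nonnegative integer with p^s > m. Then m_{λ + p^s μ, O • p^s O'} = m_{λ,O} · m_{μ,O'}, where λ + p^s μ is the (entrywise) partition of m + p^s n, p^s O' is the multiset obtained by multiplying every element of O' by p^s, and O • p^s O' is the multiset union. -/

import Mathlib

open scoped BigOperators

/-! ## Brauer construction for representations of finite groups -/

section Brauer

variable {F : Type} [Field F] {G : Type} [Group G]
variable {V : Type} [AddCommGroup V] [Module F V]

/-- The submodule of `P`-fixed points of a representation. -/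
def repFixed (ρ : Representation F G V) (P : Subgroup G) : Submodule F V where
  carrier := {v | ∀ g ∈ P, ρ g v = v}
  add_mem' := by
    intro a b ha hb g hg
    simp [map_add, ha g hg, hb g hg]
  zero_mem' := by
    intro g hg
    simp
  smul_mem' := by
    intro c v hv g hg
    simp [map_smul, hv g hg]

/-- The relative trace map `Tr_Q^P` (as a bare function, summing over a set of
left coset representatives of `Q` in `P`). -/
noncomputable def relTrace [Finite G] (ρ : Representation F G V) (P Q : Subgroup G)
    (v : V) : V := by
  classical
  have : Fintype (P ⧸ Q.subgroupOf P) := Fintype.ofFinite _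
  exact ∑ x : P ⧸ Q.subgroupOf P, ρ ((Quotient.out x : ↥P) : G) v

/-- The subspace `Tr^P(M) = Σ_{Q < P} Tr_Q^P (M^Q)` (as a submodule of `V`). -/
noncomputable def brauerTraceSub [Finite G] (ρ : Representation F G V) (P : Subgroup G) :
    Submodule F V :=
  Submodule.span F {w | ∃ Q : Subgroup G, Q < P ∧ ∃ v ∈ repFixed ρ Q, w = relTrace ρ P Q v}

/-- The dimension of the Brauer construction `M(P) = M^P / Tr^P(M)`. -/
noncomputable def brauerDim [Finite G] (ρ : Representation F G V) (P : Subgroup G) : ℕ :=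
  Module.finrank F
    (↥(repFixed ρ P) ⧸ ((brauerTraceSub ρ P).comap (repFixed ρ P).subtype))

/-- `σ` is (isomorphic to) a direct summand of `ρ`: there is an equivariant split
injection of `σ` into `ρ`. -/
def IsRepSummand {W : Type} [AddCommGroup W] [Module F W]
    (ρ : Representation F G V) (σ : Representation F G W) : Prop :=
  ∃ (ι : W →ₗ[F] V) (π : V →ₗ[F] W),
    (∀ g w, ι (σ g w) = ρ g (ι w)) ∧ (∀ g v, π (ρ g v) = σ g (π v)) ∧ ∀ w, π (ι w) = w

/-- A representation is indecomposable: nonzero, and admitting no nontrivial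
decomposition into two invariant submodules. -/
def IsIndecomposableRep (ρ : Representation F G V) : Prop :=
  (∃ v : V, v ≠ 0) ∧
  ∀ A B : Submodule F V, (∀ g, ∀ v ∈ A, ρ g v ∈ A) → (∀ g, ∀ v ∈ B, ρ g v ∈ B) →
    A ⊓ B = ⊥ → A ⊔ B = ⊤ → A = ⊥ ∨ B = ⊥

/-- Isomorphism of representations. -/
def RepIso {W : Type} [AddCommGroup W] [Module F W]
    (ρ : Representation F G V) (σ : Representation F G W) : Prop :=
  ∃ e : V ≃ₗ[F] W, ∀ g v, e (ρ g v) = σ g (e v)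

end Brauer

/-! ## Compositions, partitions, tabloids and Young modules -/

section Young

/-- A composition of `n` as a finitely supported function `ℕ → ℕ` with sum `n`. -/
def IsCompositionFn (c : ℕ → ℕ) (n : ℕ) : Prop :=
  (Function.support c).Finite ∧ ∑ᶠ j, c j = n

/-- A partition of `n` as a finitely supported weakly decreasing function `ℕ → ℕ`
with sum `n`. -/
def IsPartitionFn (c : ℕ → ℕ) (n : ℕ) : Prop :=
  IsCompositionFn c n ∧ Antitone c

/-- A `p`-restricted partition: all successive differences (including the last
part) are `< p`. -/
def IsPRestrictedFn (p : ℕ) (c : ℕ → ℕ) : Prop := ∀ j, c j - c (j + 1) < p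

/-- The dominance order: `Dominates lam mu` means `lam ⊵ mu`. -/
def Dominates (lam mu : ℕ → ℕ) : Prop :=
  ∀ N, ∑ j ∈ Finset.range N, mu j ≤ ∑ j ∈ Finset.range N, lam j

/-- Strict dominance `lam ⊳ mu`. -/
def StrictDominates (lam mu : ℕ → ℕ) : Prop := Dominates lam mu ∧ lam ≠ mu

/-- A `c`-tabloid: a tuple of pairwise disjoint subsets of `{1,…,n}` covering
everything, the `j`-th of size `c j`. -/
structure Tabloid (n : ℕ) (c : ℕ → ℕ) where
  row : ℕ → Finset (Fin n)
  disj : ∀ i j, i ≠ j → Disjoint (row i) (row j)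
  card_row : ∀ j, (row j).card = c j
  cover : ∀ x, ∃ j, x ∈ row j

theorem Tabloid.ext' {n : ℕ} {c : ℕ → ℕ} {T S : Tabloid n c} (h : T.row = S.row) :
    T = S := by
  cases T; cases S; simp_all

/-- The natural action of the symmetric group on tabloids. -/
instance {n : ℕ} {c : ℕ → ℕ} : MulAction (Equiv.Perm (Fin n)) (Tabloid n c) where
  smul σ T :=
    { row := fun j => (T.row j).image σ
      disj := fun i j h => (Finset.disjoint_image σ.injective).mpr (T.disj i j h)
      card_row := fun j => by
        rw [Finset.card_image_of_injective _ σ.injective, T.card_row]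
      cover := fun x => by
        obtain ⟨j, hj⟩ := T.cover (σ⁻¹ x)
        exact ⟨j, Finset.mem_image.mpr ⟨σ⁻¹ x, hj, by simp⟩⟩ }
  one_smul T := Tabloid.ext' (by funext j; exact Finset.image_id)
  mul_smul a b T := Tabloid.ext' (by
    funext j
    show Finset.image (⇑(a * b)) _ = Finset.image ⇑a (Finset.image ⇑b _)
    rw [Finset.image_image]
    rfl)

/-- The Young permutation module `M^c`, as the permutation representation of
`S_n` on the free `F`-module on the set of `c`-tabloids. -/
noncomputable def youngRep (F : Type) [Field F] (n : ℕ) (c : ℕ → ℕ) :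
    Representation F (Equiv.Perm (Fin n)) (Tabloid n c →₀ F) :=
  { toFun := fun g => Finsupp.lmapDomain F F (g • ·)
    map_one' := by ext; simp
    map_mul' := fun x y => by ext; simp [mul_smul] }

/-- `ρ` is a Young module `Y^lam`: an indecomposable direct summand of `M^lam`
which is not a direct summand of any `M^mu` with `mu ⊳ lam`. -/
def IsYoungModuleFor (F : Type) [Field F] (n : ℕ) (lam : ℕ → ℕ)
    {V : Type} [AddCommGroup V] [Module F V]
    (ρ : Representation F (Equiv.Perm (Fin n)) V) : Prop :=
  IsIndecomposableRep ρ ∧ IsRepSummand (youngRep F n lam) ρ ∧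
  ∀ mu : ℕ → ℕ, IsPartitionFn mu n → StrictDominates mu lam →
    ¬ IsRepSummand (youngRep F n mu) ρ

end Young

/-! ## Orbit types, Young subgroups and related combinatorics -/

section Orbits

/-- The orbit type of a subgroup `P ≤ S_n`: the multiset of cardinalities of
the orbits of `P` on `{1,…,n}`. -/
noncomputable def orbitType (n : ℕ) (P : Subgroup (Equiv.Perm (Fin n))) : Multiset ℕ := by
  classical
  exact (Finset.univ.image fun x : Fin n => MulAction.orbit P x).val.map fun s => s.ncard

/-- The multiset of (nonempty) fiber sizes of a labelling `f : {1,…,n} → ℕ`;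
the fibers of `f` are the blocks of a set partition of `{1,…,n}`. -/
noncomputable def fiberSizes {n : ℕ} (f : Fin n → ℕ) : Multiset ℕ := by
  classical
  exact (Finset.univ.image f).val.map fun j => (Finset.univ.filter fun x => f x = j).card

/-- The subgroup of permutations preserving each fiber (block) of the
labelling `f`; for an interval labelling this is a Young subgroup. -/
def blockStabilizer (n : ℕ) (f : Fin n → ℕ) : Subgroup (Equiv.Perm (Fin n)) where
  carrier := {σ | ∀ x, f (σ x) = f x}
  one_mem' := fun _ => rfl
  mul_mem' := by
    intro a b ha hb x
    rw [Equiv.Perm.mul_apply, ha, hb]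
  inv_mem' := by
    intro a ha x
    simpa using (ha (a⁻¹ x)).symm

/-- `P` is a Sylow `p`-subgroup of the subgroup `H`. -/
def IsSylowPSubgroupIn {G : Type} [Group G] (p : ℕ) (P H : Subgroup G) : Prop :=
  P ≤ H ∧ IsPGroup p P ∧ ∀ Q : Subgroup G, IsPGroup p Q → Q ≤ H → P ≤ Q → Q = P

/-- Every member of `O` is a power of `p`. -/
def IsPPowerMultiset (p : ℕ) (O : Multiset ℕ) : Prop := ∀ x ∈ O, ∃ i : ℕ, x = p ^ i

/-- `lamE 0, …, lamE s` is the `p`-adic expansion of the partition `lam`: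
each `lamE i` is a `p`-restricted partition and `lam = Σ_i p^i • lamE i`. -/
def IsPAdicExpansionOf (p : ℕ) (lam : ℕ → ℕ) (s : ℕ) (lamE : ℕ → ℕ → ℕ) : Prop :=
  (∀ i, i ≤ s →
    (Function.support (lamE i)).Finite ∧ Antitone (lamE i) ∧ IsPRestrictedFn p (lamE i)) ∧
  ∀ j, lam j = ∑ i ∈ Finset.range (s + 1), p ^ i * lamE i j

/-- The multiset `O_lam = (1^{|lam(0)|}, p^{|lam(1)|}, …, (p^s)^{|lam(s)|})`
attached to a `p`-adic expansion. -/
noncomputable def pAdicOrbitMultiset (p s : ℕ) (lamE : ℕ → ℕ → ℕ) : Multiset ℕ :=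
  ∑ i ∈ Finset.range (s + 1), Multiset.replicate (∑ᶠ j, lamE i j) (p ^ i)

/-- `O` is a rearrangement of a refinement of `O'`: `O` is a disjoint union of
submultisets, one summing to each element of `O'`. -/
def IsRefinementRearrangement (O O' : Multiset ℕ) : Prop :=
  ∃ C : Multiset (Multiset ℕ), C.map Multiset.sum = O' ∧ C.sum = O

/-- `P` is conjugate to a subgroup of `Q`. -/
def IsConjSubgroup {G : Type} [Group G] (P Q : Subgroup G) : Prop :=
  ∃ g : G, ∀ x ∈ P, g * x * g⁻¹ ∈ Q

/-- An elementary abelian `p`-subgroup. -/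
def IsElementaryAbelian (p : ℕ) {G : Type} [Group G] (E : Subgroup G) : Prop :=
  (∀ x ∈ E, x ^ p = 1) ∧ ∀ x ∈ E, ∀ y ∈ E, x * y = y * x

/-- Every row of the tabloid `T` is a union of fibers (blocks) of `f`. -/
def rowsUnionOfFibers {n : ℕ} {c : ℕ → ℕ} (f : Fin n → ℕ) (T : Tabloid n c) : Prop :=
  ∀ j x y, f x = f y → x ∈ T.row j → y ∈ T.row j

/-- The number `m_{c,O}`: the number of `c`-tabloids each of whose rows is a
union of blocks of the set partition with labelling `f`. -/
noncomputable def mNumber (n : ℕ) (c : ℕ → ℕ) (f : Fin n → ℕ) : ℕ :=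
  Nat.card {T : Tabloid n c // rowsUnionOfFibers f T}

end Orbits

/-! ## Generic Jordan types -/

section Jordan

/-- The nilpotent Jordan block of size `p` over `K`, as an endomorphism of `K^p`. -/
def jordanShift (p : ℕ) (K : Type) [Field K] : (Fin p → K) →ₗ[K] (Fin p → K) where
  toFun v := fun i => if h : i.val + 1 < p then v ⟨i.val + 1, h⟩ else 0
  map_add' x y := by
    funext i
    by_cases h : (i : ℕ) + 1 < p <;> simp [h]
  map_smul' c x := by
    funext i
    by_cases h : (i : ℕ) + 1 < p <;> simp [h]

/-- The rational function field `F(α_1, …, α_k)`. -/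
abbrev RatFuncField (F : Type) [Field F] (k : ℕ) : Type :=
  FractionRing (MvPolynomial (Fin k) F)

/-- The operator `u_α − 1 = Σ_i α_i (ρ(g_i) − 1)` on `K ⊗_F V`, where
`K = F(α_1,…,α_k)`. -/
noncomputable def uAlphaSubOne {F : Type} [Field F] {G : Type} [Group G]
    {V : Type} [AddCommGroup V] [Module F V]
    (ρ : Representation F G V) (k : ℕ) (g : Fin k → G) :
    TensorProduct F (RatFuncField F k) V →ₗ[RatFuncField F k]
      TensorProduct F (RatFuncField F k) V :=
  ∑ i : Fin k,
    (algebraMap (MvPolynomial (Fin k) F) (RatFuncField F k) (MvPolynomial.X i)) •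
      LinearMap.baseChange (RatFuncField F k) (ρ (g i) - LinearMap.id)

end Jordan

/-!
A tabloid whose rows are unions of blocks is the same as a map sending each block to a row, such
that the block sizes landing in row `j` add up to `λ_j`. For the blocks of `O • p^s O'` and the
row lengths `λ_j + p^s μ_j`, the blocks coming from `O`, of total size `m < p^s`, contribute to
row `j` a number `< p^s`, while those coming from `p^s O'` contribute a multiple of `p^s`. Since
`λ_j < p^s` as well, uniqueness of division with remainder by `p^s` splits the condition on row
`j` into one for `(λ, O)` and one for `(μ, O')`.
-/

open Finset Function

lemma Nat.eq_and_eq_of_add_mul_eq_add_mul {q a a' b b' : ℕ} (ha : a < q) (ha' : a' < q)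
    (h : a + q * b = a' + q * b') : a = a' ∧ b = b' := by
  have hq : 0 < q := (Nat.zero_le a).trans_lt ha
  obtain ⟨hb, ha⟩ := (Nat.div_mod_unique hq).2 ⟨h, ha⟩
  obtain ⟨hb', ha'⟩ := (Nat.div_mod_unique hq).2 ⟨rfl, ha'⟩
  exact ⟨ha.symm.trans ha', hb.symm.trans hb'⟩

lemma Multiset.map_univ_val_sumElim {α β γ : Type} [Fintype α] [Fintype β] (u : α → γ)
    (v : β → γ) :
    (univ.val : Multiset (α ⊕ β)).map (Sum.elim u v) = univ.val.map u + univ.val.map v := by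
  rw [← univ_disjSum_univ, val_disjSum, Multiset.disjSum, Multiset.map_add, Multiset.map_map,
    Multiset.map_map]
  rfl

lemma exists_equiv_of_map_univ_val_eq {α β γ : Type} [Fintype α] [Fintype β] [DecidableEq γ]
    (u : α → γ) (w : β → γ) (h : univ.val.map u = univ.val.map w) :
    ∃ e : α ≃ β, ∀ a, w (e a) = u a := by
  have hcount : ∀ {δ : Type} [Fintype δ] (g : δ → γ) (v : γ),
      Fintype.card {x // g x = v} = (univ.val.map g).count v := by
    intro δ _ g v
    rw [Multiset.count_map, Fintype.card_subtype, card_def, filter_val]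
    exact congrArg Multiset.card (Multiset.filter_congr fun x _ => eq_comm)
  have hfiber (v : γ) : Fintype.card {a // u a = v} = Fintype.card {b // w b = v} := by
    rw [hcount, hcount, h]
  refine ⟨(Equiv.sigmaFiberEquiv u).symm.trans
      ((Equiv.sigmaCongrRight fun v => Fintype.equivOfCardEq (hfiber v)).trans
        (Equiv.sigmaFiberEquiv w)), fun a => ?_⟩
  exact ((Fintype.equivOfCardEq (hfiber (u a))) ⟨a, rfl⟩).2

def BlockAssignment {α : Type} [Fintype α] (w : α → ℕ) (c : ℕ → ℕ) : Type :=
  {h : α → ℕ // ∀ j, ∑ a ∈ univ.filter (h · = j), w a = c j}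

namespace BlockAssignment

def congr {α β : Type} [Fintype α] [Fintype β] {w : α → ℕ} {w' : β → ℕ} (e : α ≃ β)
    (hw : ∀ a, w' (e a) = w a) (c : ℕ → ℕ) : BlockAssignment w c ≃ BlockAssignment w' c where
  toFun h := ⟨h.1 ∘ e.symm, fun j => by
    rw [← h.2 j]
    exact (sum_equiv e (fun a => by simp) (fun a _ => (hw a).symm)).symm⟩
  invFun h := ⟨h.1 ∘ e, fun j => by
    rw [← h.2 j]
    exact sum_equiv e (fun a => by simp) (fun a _ => (hw a).symm)⟩
  left_inv h := Subtype.ext (by funext a; simp)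
  right_inv h := Subtype.ext (by funext b; simp)

variable {α β : Type} [Fintype α] [Fintype β] (w₁ : α → ℕ) (w₂ : β → ℕ) (q : ℕ)

lemma sum_filter_sumElim (h : α ⊕ β → ℕ) (j : ℕ) :
    ∑ l ∈ univ.filter (h · = j), Sum.elim w₁ (q * w₂ ·) l
      = ∑ a ∈ univ.filter (fun a => h (Sum.inl a) = j), w₁ a
        + q * ∑ b ∈ univ.filter (fun b => h (Sum.inr b) = j), w₂ b := by
  rw [sum_filter, sum_filter, sum_filter, Fintype.sum_sum_type, mul_sum]
  simp [mul_ite]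

def sumEquiv {c₁ c₂ : ℕ → ℕ} (hc₁ : ∀ j, c₁ j < q) (hw₁ : ∑ a, w₁ a < q) :
    BlockAssignment (Sum.elim w₁ (q * w₂ ·)) (fun j => c₁ j + q * c₂ j) ≃
      BlockAssignment w₁ c₁ × BlockAssignment w₂ c₂ := by
  have hsplit (h : α ⊕ β → ℕ)
      (hh : ∀ j, ∑ l ∈ univ.filter (h · = j), Sum.elim w₁ (q * w₂ ·) l = c₁ j + q * c₂ j)
      (j : ℕ) :
      ∑ a ∈ univ.filter (fun a => h (Sum.inl a) = j), w₁ a = c₁ j ∧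
        ∑ b ∈ univ.filter (fun b => h (Sum.inr b) = j), w₂ b = c₂ j := by
    have hlt : ∑ a ∈ univ.filter (fun a => h (Sum.inl a) = j), w₁ a < q :=
      (sum_le_sum_of_subset (filter_subset _ _)).trans_lt hw₁
    exact Nat.eq_and_eq_of_add_mul_eq_add_mul hlt (hc₁ j)
      ((sum_filter_sumElim w₁ w₂ q h j).symm.trans (hh j))
  exact
    { toFun := fun h =>
        (⟨(h.1 <| Sum.inl ·), fun j => (hsplit h.1 h.2 j).1⟩,
         ⟨(h.1 <| Sum.inr ·), fun j => (hsplit h.1 h.2 j).2⟩)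
      invFun := fun h => ⟨Sum.elim h.1.1 h.2.1, fun j => by
        rw [sum_filter_sumElim]
        exact congrArg₂ (· + q * ·) (h.1.2 j) (h.2.2 j)⟩
      left_inv := fun h => Subtype.ext (by funext l; cases l <;> rfl)
      right_inv := fun _ => rfl }

end BlockAssignment

namespace Tabloid

variable {N : ℕ} {c : ℕ → ℕ}

noncomputable def rowOf (T : Tabloid N c) (x : Fin N) : ℕ := (T.cover x).choose

lemma mem_row_iff (T : Tabloid N c) {x : Fin N} {j : ℕ} : x ∈ T.row j ↔ T.rowOf x = j := by
  refine ⟨fun hx => ?_, fun h => h ▸ (T.cover x).choose_spec⟩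
  by_contra hne
  exact disjoint_left.mp (T.disj _ _ hne) (T.cover x).choose_spec hx

lemma row_eq_filter (T : Tabloid N c) (j : ℕ) : T.row j = univ.filter (T.rowOf · = j) := by
  ext x
  simp [mem_row_iff]

def ofRowOf (g : Fin N → ℕ) (hg : ∀ j, #(univ.filter (g · = j)) = c j) : Tabloid N c where
  row j := univ.filter (g · = j)
  disj _ _ hij := disjoint_left.mpr fun _ hi hj =>
    hij ((mem_filter.mp hi).2.symm.trans (mem_filter.mp hj).2)
  card_row := hg
  cover x := ⟨g x, mem_filter.mpr ⟨mem_univ x, rfl⟩⟩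

lemma rowOf_ofRowOf (g : Fin N → ℕ) (hg : ∀ j, #(univ.filter (g · = j)) = c j) :
    (ofRowOf g hg).rowOf = g :=
  funext fun x => (ofRowOf g hg).mem_row_iff.mp (mem_filter.mpr ⟨mem_univ x, rfl⟩)

lemma rowsUnionOfFibers_iff (f : Fin N → ℕ) (T : Tabloid N c) :
    rowsUnionOfFibers f T ↔ ∀ x y, f x = f y → T.rowOf x = T.rowOf y := by
  refine ⟨fun hT x y hxy => ?_, fun hT j x y hxy hx => ?_⟩
  · exact (T.mem_row_iff.mp (hT _ x y hxy (T.mem_row_iff.mpr rfl))).symm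
  · rw [mem_row_iff] at hx ⊢
    rw [← hT x y hxy, hx]

end Tabloid

section Blocks

variable {N : ℕ} {α : Type} [Fintype α] [DecidableEq α]

def fiberCard (F : Fin N → α) (a : α) : ℕ := #(univ.filter (F · = a))

lemma card_filter_comp_eq_sum_fiberCard (F : Fin N → α) (h : α → ℕ) (j : ℕ) :
    #(univ.filter fun x => h (F x) = j) = ∑ a ∈ univ.filter (h · = j), fiberCard F a := by
  simp [fiberCard, sum_card_fiberwise_eq_card_filter]

lemma sum_fiberCard (F : Fin N → α) : ∑ a, fiberCard F a = N := by
  simp [fiberCard, sum_card_fiberwise_eq_card_filter]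

noncomputable def rowsUnionOfFibersEquiv {c : ℕ → ℕ} (f : Fin N → ℕ) (F : Fin N → α)
    (hF : Surjective F) (hfib : ∀ x y, f x = f y ↔ F x = F y) :
    {T : Tabloid N c // rowsUnionOfFibers f T} ≃ BlockAssignment (fiberCard F) c := by
  have hrowOf (T : {T : Tabloid N c // rowsUnionOfFibers f T}) (x : Fin N) :
      T.1.rowOf (surjInv hF (F x)) = T.1.rowOf x :=
    (T.1.rowsUnionOfFibers_iff f).mp T.2 _ _ ((hfib _ _).mpr (surjInv_eq hF (F x)))
  exact
    { toFun := fun T => ⟨T.1.rowOf ∘ surjInv hF, fun j => by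
        simp only [← card_filter_comp_eq_sum_fiberCard, comp_apply, hrowOf,
          ← Tabloid.row_eq_filter, T.1.card_row]⟩
      invFun := fun h =>
        ⟨.ofRowOf (h.1 ∘ F) fun j => (card_filter_comp_eq_sum_fiberCard F h.1 j).trans (h.2 j),
          by
            rw [Tabloid.rowsUnionOfFibers_iff, Tabloid.rowOf_ofRowOf]
            intro x y hxy
            simp [(hfib x y).mp hxy]⟩
      left_inv := fun T => Subtype.ext <| Tabloid.ext' <| funext fun j => by
        simp [Tabloid.ofRowOf, hrowOf, T.1.row_eq_filter j]
      right_inv := fun h => Subtype.ext <| funext fun a => by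
        obtain ⟨x, rfl⟩ := hF a
        simp [Tabloid.rowOf_ofRowOf, surjInv_eq hF] }

end Blocks

def blockOf {N : ℕ} (f : Fin N → ℕ) (x : Fin N) : univ.image f :=
  ⟨f x, mem_image_of_mem f (mem_univ x)⟩

lemma mNumber_eq_card_blockAssignment (N : ℕ) (c : ℕ → ℕ) (f : Fin N → ℕ) :
    mNumber N c f = Nat.card (BlockAssignment (fiberCard (blockOf f)) c) :=
  Nat.card_congr <| rowsUnionOfFibersEquiv f (blockOf f)
    (fun l => (mem_image.mp l.2).elim fun x hx => ⟨x, Subtype.ext hx.2⟩)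
    (fun _ _ => ⟨fun h => Subtype.ext h, congrArg Subtype.val⟩)

lemma map_fiberCard_blockOf {N : ℕ} (f : Fin N → ℕ) :
    univ.val.map (fiberCard (blockOf f)) = fiberSizes f := by
  rw [fiberSizes, univ_eq_attach, ← Multiset.attach_map_val (univ.image f).val,
    Multiset.map_map]
  congr 1
  funext l
  simp only [fiberCard, blockOf, Subtype.ext_iff, comp_apply]

theorem stmt_11_general (p : ℕ) (m n s : ℕ) (hps : m < p ^ s)
    (lam : ℕ → ℕ) (hlam : IsPartitionFn lam m)
    (mu : ℕ → ℕ)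
    (O O' : Multiset ℕ)
    (f1 : Fin m → ℕ) (hf1 : fiberSizes f1 = O)
    (f2 : Fin n → ℕ) (hf2 : fiberSizes f2 = O')
    (f3 : Fin (m + p ^ s * n) → ℕ)
    (hf3 : fiberSizes f3 = O + O'.map (fun x => p ^ s * x)) :
    mNumber (m + p ^ s * n) (fun j => lam j + p ^ s * mu j) f3
      = mNumber m lam f1 * mNumber n mu f2 := by
  have hlam_lt (j : ℕ) : lam j < p ^ s :=
    (hlam.1.2 ▸ single_le_finsum j hlam.1.1 fun k => Nat.zero_le (lam k)).trans_lt hps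
  have hw₁ : ∑ a, fiberCard (blockOf f1) a < p ^ s := (sum_fiberCard _).trans_lt hps
  obtain ⟨e, he⟩ := exists_equiv_of_map_univ_val_eq
    (Sum.elim (fiberCard (blockOf f1)) (p ^ s * fiberCard (blockOf f2) ·))
    (fiberCard (blockOf f3)) (by
      rw [Multiset.map_univ_val_sumElim, map_fiberCard_blockOf f1, map_fiberCard_blockOf f3, hf3,
        hf1, ← hf2, ← map_fiberCard_blockOf f2, Multiset.map_map]
      rfl)
  rw [mNumber_eq_card_blockAssignment, mNumber_eq_card_blockAssignment,
    mNumber_eq_card_blockAssignment, ← Nat.card_prod]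
  exact Nat.card_congr <| (BlockAssignment.congr e he _).symm.trans
    (BlockAssignment.sumEquiv _ _ _ hlam_lt hw₁)

/-- `m_{lam + p^s mu, O • p^s O'} = m_{lam,O} · m_{mu,O'}` when
`p^s > m`. -/
theorem stmt_11 (p : ℕ) [Fact p.Prime] (m n s : ℕ) (hps : m < p ^ s)
    (lam : ℕ → ℕ) (hlam : IsPartitionFn lam m)
    (mu : ℕ → ℕ) (hmu : IsPartitionFn mu n)
    (O O' : Multiset ℕ) (hO : IsPPowerMultiset p O) (hO' : IsPPowerMultiset p O')
    (hOm : O.sum = m) (hOn : O'.sum = n)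
    (f1 : Fin m → ℕ) (hf1 : fiberSizes f1 = O)
    (f2 : Fin n → ℕ) (hf2 : fiberSizes f2 = O')
    (f3 : Fin (m + p ^ s * n) → ℕ)
    (hf3 : fiberSizes f3 = O + O'.map (fun x => p ^ s * x)) :
    mNumber (m + p ^ s * n) (fun j => lam j + p ^ s * mu j) f3
      = mNumber m lam f1 * mNumber n mu f2 :=
  stmt_11_general p m n s hps lam hlam mu O O' f1 hf1 f2 hf2 f3 hf3
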